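/- arXiv:1701.01482 — 2 statements merged into one kernel-verified Lean document; each statement's English description precedes it below -/
import Mathlib

section
/- Let a, b, φ, θ be real numbers with ab ≠ 0 and sin((φ−θ)/2) ≠ 0; set Δ = φ − θ, m_k = a·e^{ikφ} + b·e^{ikθ}, and M_k = |m_k|. Then M_2² + 3M_0² − 4M_1² = 4ab·(cos Δ − 1)² ≠ 0, and the product of amplitudes is recovered by ab = (M_1² − M_0²)² / (M_2² + 3M_0² − 4M_1²). -/
/-!
Each squared modulus is `M_k² = a² + b² + 2ab cos kΔ`. Since `cos 2Δ = 2cos²Δ − 1`, the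
combination `M₂² + 3M₀² − 4M₁²` cancels `a² + b²` and leaves `4ab(cos Δ − 1)²`, while
`M₁² − M₀² = 2ab(cos Δ − 1)`; squaring the latter and dividing gives `ab`. Nonvanishing comes
from `cos Δ − 1 = −2 sin²(Δ/2)`.
-/

open Complex in
theorem norm_sq_add_exp_mul_I (a b x y : ℝ) :
    ‖(a : ℂ) * exp (I * x) + (b : ℂ) * exp (I * y)‖ ^ 2
      = a ^ 2 + b ^ 2 + 2 * a * b * Real.cos (x - y) := by
  rw [Complex.sq_norm, normSq_apply, mul_comm I, mul_comm I, exp_mul_I, exp_mul_I]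
  simp only [add_re, add_im, mul_re, mul_im, ofReal_re, ofReal_im, cos_ofReal_re,
    sin_ofReal_re, cos_ofReal_im, sin_ofReal_im, I_re, I_im]
  rw [Real.cos_sub]
  nlinarith [Real.sin_sq_add_cos_sq x, Real.sin_sq_add_cos_sq y]

theorem Real.cos_sub_one_eq (x : ℝ) : Real.cos x - 1 = -2 * Real.sin (x / 2) ^ 2 := by
  conv_lhs => rw [← mul_div_cancel₀ x two_ne_zero, Real.cos_two_mul, Real.cos_sq']
  ring

theorem moment_norm_sq (a b φ θ : ℝ) (k : ℕ) :
    ‖(a : ℂ) * Complex.exp (Complex.I * k * φ) + (b : ℂ) * Complex.exp (Complex.I * k * θ)‖ ^ 2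
      = a ^ 2 + b ^ 2 + 2 * a * b * Real.cos (k * (φ - θ)) := by
  have h := norm_sq_add_exp_mul_I a b (k * φ) (k * θ)
  push_cast [mul_assoc] at h ⊢
  rw [h, mul_sub]

/-- Recovery of the product of amplitudes: with `m_k = a·e^{ikφ} + b·e^{ikθ}`,
`M_k = |m_k|`, `Δ = φ − θ`, `ab ≠ 0` and `sin(Δ/2) ≠ 0`, one has
`M₂² + 3M₀² − 4M₁² = 4ab(cos Δ − 1)² ≠ 0` and
`ab = (M₁² − M₀²)²/(M₂² + 3M₀² − 4M₁²)`. -/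
theorem amplitude_product_recovery
    (a b φ θ : ℝ) (hab : a * b ≠ 0) (hs : Real.sin ((φ - θ) / 2) ≠ 0)
    (M : ℕ → ℝ)
    (hM : ∀ k : ℕ, M k = ‖(a : ℂ) * Complex.exp (Complex.I * k * φ) +
        (b : ℂ) * Complex.exp (Complex.I * k * θ)‖) :
    M 2 ^ 2 + 3 * M 0 ^ 2 - 4 * M 1 ^ 2 = 4 * a * b * (Real.cos (φ - θ) - 1) ^ 2 ∧
    M 2 ^ 2 + 3 * M 0 ^ 2 - 4 * M 1 ^ 2 ≠ 0 ∧
    a * b = (M 1 ^ 2 - M 0 ^ 2) ^ 2 / (M 2 ^ 2 + 3 * M 0 ^ 2 - 4 * M 1 ^ 2) := by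
  have hMsq (k : ℕ) : M k ^ 2 = a ^ 2 + b ^ 2 + 2 * a * b * Real.cos (k * (φ - θ)) := by
    rw [hM k, moment_norm_sq]
  have h0 := hMsq 0
  have h1 := hMsq 1
  have h2 := hMsq 2
  simp only [Nat.cast_zero, Nat.cast_one, Nat.cast_ofNat, zero_mul, one_mul,
    Real.cos_zero, Real.cos_two_mul] at h0 h1 h2
  have hcos : Real.cos (φ - θ) - 1 ≠ 0 := by
    rw [Real.cos_sub_one_eq]
    exact mul_ne_zero (by norm_num) (pow_ne_zero 2 hs)
  have hD : M 2 ^ 2 + 3 * M 0 ^ 2 - 4 * M 1 ^ 2 = 4 * a * b * (Real.cos (φ - θ) - 1) ^ 2 := by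
    rw [h0, h1, h2]; ring
  have hDne : M 2 ^ 2 + 3 * M 0 ^ 2 - 4 * M 1 ^ 2 ≠ 0 := by
    rw [hD, mul_assoc 4 a b]
    exact mul_ne_zero (mul_ne_zero four_ne_zero hab) (pow_ne_zero 2 hcos)
  refine ⟨hD, hDne, ?_⟩
  rw [eq_div_iff hDne, hD, h0, h1]
  ring
end

section
/- Let a, b, φ, θ be real numbers with ab ≠ 0 and sin((φ−θ)/2) ≠ 0; set Δ = φ − θ, m_k = a·e^{ikφ} + b·e^{ikθ}, M_k = |m_k|, and D = M_0² − 4(M_1² − M_0²)²/(M_2² + 3M_0² − 4M_1²). Then D = (a − b)². Moreover, if in addition a ≥ b and a + b ≥ 0, then a = (M_0 + √D)/2 and b = (M_0 − √D)/2. -/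
/-!
Expanding `|a e^{ikφ} + b e^{ikθ}|²` gives `M_k² = a² + b² + 2ab cos(kΔ)`, so with `c = cos Δ`
the moduli satisfy `M₀² = (a + b)²`, `M₁² − M₀² = 2ab(c − 1)` and
`M₂² + 3M₀² − 4M₁² = 4ab(c − 1)²`. The quotient in `D` is therefore `ab`, and
`D = (a + b)² − 4ab = (a − b)²`, provided `c ≠ 1`, i.e. `sin(Δ/2) ≠ 0`. Under `a ≥ b` and
`a + b ≥ 0` the square roots `M₀ = a + b` and `√D = a − b` determine `a` and `b`.
-/

open Complex in
theorem norm_sq_ofReal_mul_exp_add_ofReal_mul_exp (a b x y : ℝ) :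
    ‖(a : ℂ) * exp (x * I) + b * exp (y * I)‖ ^ 2 =
      a ^ 2 + b ^ 2 + 2 * a * b * Real.cos (x - y) := by
  rw [Complex.sq_norm, exp_mul_I, exp_mul_I]
  simp only [normSq_apply, add_re, add_im, mul_re, mul_im, I_re, I_im, ofReal_re, ofReal_im,
    cos_ofReal_re, cos_ofReal_im, sin_ofReal_re, sin_ofReal_im]
  linear_combination a ^ 2 * Real.sin_sq_add_cos_sq x + b ^ 2 * Real.sin_sq_add_cos_sq y -
    2 * a * b * Real.cos_sub x y

open Complex in
theorem norm_sq_moment (a b φ θ : ℝ) (k : ℕ) :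
    ‖(a : ℂ) * exp (I * k * φ) + b * exp (I * k * θ)‖ ^ 2 =
      a ^ 2 + b ^ 2 + 2 * a * b * Real.cos (k * (φ - θ)) := by
  have h_arg (t : ℝ) : I * k * t = ((k * t : ℝ) : ℂ) * I := by push_cast; ring
  rw [h_arg, h_arg, norm_sq_ofReal_mul_exp_add_ofReal_mul_exp, mul_sub]

theorem Real.cos_ne_one_of_sin_half_ne_zero {x : ℝ} (hx : Real.sin (x / 2) ≠ 0) :
    Real.cos x ≠ 1 := by
  have h_cos : Real.cos x = 1 - 2 * Real.sin (x / 2) ^ 2 := by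
    rw [← Real.cos_two_mul_eq_one_sub, mul_div_cancel₀ x two_ne_zero]
  have : 0 < Real.sin (x / 2) ^ 2 := by positivity
  linarith

theorem amplitude_discriminant_eq {a b c m₀ m₁ m₂ : ℝ} (hc : c ≠ 1)
    (h₀ : m₀ = (a + b) ^ 2) (h₁ : m₁ = a ^ 2 + b ^ 2 + 2 * a * b * c)
    (h₂ : m₂ = a ^ 2 + b ^ 2 + 2 * a * b * (2 * c ^ 2 - 1)) :
    m₀ - 4 * (m₁ - m₀) ^ 2 / (m₂ + 3 * m₀ - 4 * m₁) = (a - b) ^ 2 := by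
  have h_num : m₁ - m₀ = 2 * (a * b) * (c - 1) := by rw [h₀, h₁]; ring
  have h_den : m₂ + 3 * m₀ - 4 * m₁ = 4 * (a * b) * (c - 1) ^ 2 := by rw [h₀, h₁, h₂]; ring
  rcases eq_or_ne (a * b) 0 with hab | hab
  · -- the quotient is the junk value `0 / 0 = 0`, and `(a + b)² = (a - b)²` since `ab = 0`
    rw [h_num, h_den, h₀, hab]
    simp only [mul_zero, zero_mul, zero_pow two_ne_zero, zero_div, sub_zero]
    linear_combination 4 * hab
  · have hc' : c - 1 ≠ 0 := sub_ne_zero.mpr hc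
    rw [h_num, h_den, h₀]
    field_simp
    ring

theorem amplitude_recovery_general
    (a b φ θ : ℝ) (hs : Real.sin ((φ - θ) / 2) ≠ 0)
    (M : ℕ → ℝ)
    (hM : ∀ k : ℕ, M k = ‖(a : ℂ) * Complex.exp (Complex.I * k * φ) +
        (b : ℂ) * Complex.exp (Complex.I * k * θ)‖)
    (D : ℝ)
    (hD : D = M 0 ^ 2 - 4 * (M 1 ^ 2 - M 0 ^ 2) ^ 2 / (M 2 ^ 2 + 3 * M 0 ^ 2 - 4 * M 1 ^ 2)) :
    D = (a - b) ^ 2 ∧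
    (a ≥ b → a + b ≥ 0 → a = (M 0 + Real.sqrt D) / 2 ∧ b = (M 0 - Real.sqrt D) / 2) := by
  have hM_sq (k : ℕ) : M k ^ 2 = a ^ 2 + b ^ 2 + 2 * a * b * Real.cos (k * (φ - θ)) := by
    rw [hM k, norm_sq_moment]
  have hM₀ : M 0 ^ 2 = (a + b) ^ 2 := by
    rw [hM_sq, Nat.cast_zero, zero_mul, Real.cos_zero]
    ring
  have hM₁ : M 1 ^ 2 = a ^ 2 + b ^ 2 + 2 * a * b * Real.cos (φ - θ) := by simpa using hM_sq 1
  have hM₂ : M 2 ^ 2 = a ^ 2 + b ^ 2 + 2 * a * b * (2 * Real.cos (φ - θ) ^ 2 - 1) := by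
    rw [hM_sq]; push_cast; rw [Real.cos_two_mul]
  have hD_eq : D = (a - b) ^ 2 := hD ▸ amplitude_discriminant_eq
    (Real.cos_ne_one_of_sin_half_ne_zero hs) hM₀ hM₁ hM₂
  refine ⟨hD_eq, fun h_ge h_sum => ?_⟩
  have hM₀_eq : M 0 = a + b :=
    (pow_left_inj₀ (by rw [hM 0]; positivity) h_sum two_ne_zero).mp hM₀
  have h_sqrt : Real.sqrt D = a - b := by rw [hD_eq, Real.sqrt_sq (sub_nonneg.mpr h_ge)]
  rw [hM₀_eq, h_sqrt]
  constructor <;> ring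

/-- Amplitude recovery: with `m_k = a·e^{ikφ} + b·e^{ikθ}`, `M_k = |m_k|`,
`ab ≠ 0`, `sin((φ−θ)/2) ≠ 0` and
`D = M₀² − 4(M₁² − M₀²)²/(M₂² + 3M₀² − 4M₁²)`, one has `D = (a − b)²`; and if moreover
`a ≥ b` and `a + b ≥ 0`, then `a = (M₀ + √D)/2` and `b = (M₀ − √D)/2`. -/
theorem amplitude_recovery
    (a b φ θ : ℝ) (hab : a * b ≠ 0) (hs : Real.sin ((φ - θ) / 2) ≠ 0)
    (M : ℕ → ℝ)
    (hM : ∀ k : ℕ, M k = ‖(a : ℂ) * Complex.exp (Complex.I * k * φ) +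
        (b : ℂ) * Complex.exp (Complex.I * k * θ)‖)
    (D : ℝ)
    (hD : D = M 0 ^ 2 - 4 * (M 1 ^ 2 - M 0 ^ 2) ^ 2 / (M 2 ^ 2 + 3 * M 0 ^ 2 - 4 * M 1 ^ 2)) :
    D = (a - b) ^ 2 ∧
    (a ≥ b → a + b ≥ 0 → a = (M 0 + Real.sqrt D) / 2 ∧ b = (M 0 - Real.sqrt D) / 2) :=
  amplitude_recovery_general a b φ θ hs M hM D hD
end
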